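/- arXiv:1707.00771 — 3 statements merged into one kernel-verified Lean document; each statement's English description precedes it below -/
import Mathlib

section
/- If x ∈ ℝ^d is badly approximable, then for every y ∈ ℝ^d there exists a non-increasing ψ : ℕ → ℝ_{≥0} with Σ_n ψ(n)^d = ∞ such that ‖nx+y‖ ≥ ψ(n) for all sufficiently large n ∈ ℕ. Equivalently, Φ(x) = ∅ for x badly approximable. -/
/-!
If `k ‖k x‖ ^ d ≥ c > 0` for all `k ≥ 1`, then `f n = ‖n x + y‖` satisfies
`c ≤ (b - a) (f a + f b) ^ d` for `a < b`, because `(b - a) x = (b x + y) - (a x + y)`.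
Hence `f` vanishes at most once, and beyond that point we take `ψ` to be the running minimum
of `f`, so that `ψ n ≤ ‖n x + y‖` eventually and `(x, y) ∉ W ψ`. Whenever the running minimum
drops at `m + 1` from a value `f r` with `r ≤ m`, the separation applied to `r` and `m + 1`
gives `(m + 1) ψ(m) ^ d ≥ c / 2 ^ d`; if it drops only finitely often it is eventually a
positive constant. Either way `n ψ(n) ^ d` does not tend to `0`, which is impossible for a
summable antitone sequence.
-/

open scoped ENNReal
open Filter

/-- Sup-norm distance from `x ∈ ℝ^d` to the nearest point of `ℤ^d`. -/
noncomputable def nrm {d : ℕ} (x : Fin d → ℝ) : ℝ :=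
  ⨆ i, |x i - round (x i)|

/-- The class `𝒟` of non-increasing `ψ : ℕ → ℝ≥0` with `Σ ψ(n)^d = ∞`. -/
def calD (d : ℕ) : Set (ℕ → ℝ) :=
  {ψ | (∀ n, 0 ≤ ψ n) ∧ Antitone ψ ∧ ¬ Summable (fun n => ψ n ^ d)}

/-- The inhomogeneously `ψ`-approximable pairs. -/
def W {d : ℕ} (ψ : ℕ → ℝ) : Set ((Fin d → ℝ) × (Fin d → ℝ)) :=
  {p | ∃ᶠ n : ℕ in atTop, nrm (fun i => (n : ℝ) * p.1 i + p.2 i) < ψ n}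

/-- `Π = ⋂_{ψ ∈ 𝒟} W(ψ)`. -/
def PiSet (d : ℕ) : Set ((Fin d → ℝ) × (Fin d → ℝ)) := ⋂ ψ ∈ calD d, W ψ

/-- The vertical fiber `Φ(x)`. -/
def Phi {d : ℕ} (x : Fin d → ℝ) : Set (Fin d → ℝ) := {y | (x, y) ∈ PiSet d}

section RunningMin

variable {α : Type*} [LinearOrder α] (g : ℕ → α)

def runningMin (n : ℕ) : α :=
  (Finset.range (n + 1)).inf' Finset.nonempty_range_add_one g

theorem runningMin_succ (n : ℕ) : runningMin g (n + 1) = min (runningMin g n) (g (n + 1)) := by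
  simp only [runningMin, Finset.range_add_one (n := n + 1)]
  exact (Finset.inf'_insert _ g).trans (min_comm _ _)

theorem runningMin_le {j n : ℕ} (h : j ≤ n) : runningMin g n ≤ g j :=
  Finset.inf'_le g (Finset.mem_range_succ_iff.2 h)

theorem exists_eq_runningMin (n : ℕ) : ∃ r ≤ n, g r = runningMin g n := by
  obtain ⟨r, hr, hgr⟩ := Finset.exists_mem_eq_inf' Finset.nonempty_range_add_one g
  exact ⟨r, Finset.mem_range_succ_iff.1 hr, hgr.symm⟩

theorem runningMin_antitone : Antitone (runningMin g) :=
  antitone_nat_of_succ_le fun n => (runningMin_succ g n).trans_le (min_le_left _ _)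

theorem lt_runningMin {a : α} (h : ∀ n, a < g n) (n : ℕ) : a < runningMin g n :=
  (Finset.lt_inf'_iff _).2 fun j _ => h j

end RunningMin

theorem not_summable_of_frequently_le_mul {a : ℕ → ℝ} {γ : ℝ} (ha : Antitone a)
    (h0 : ∀ n, 0 ≤ a n) (hγ : 0 < γ) (h : ∃ᶠ n in atTop, γ ≤ (n + 1) * a n) :
    ¬ Summable a := by
  intro hs
  -- for `n ≥ 2 N` the tail from `N` has at least `(n + 1) / 2` terms, each `≥ a n`
  obtain ⟨N, hN⟩ := ((tendsto_sum_nat_add a).eventually (gt_mem_nhds (half_pos hγ))).exists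
  obtain ⟨n, hγn, hn⟩ := (h.and_eventually (eventually_ge_atTop (2 * N))).exists
  have htail : ((n + 1 - N : ℕ) : ℝ) * a n ≤ ∑' k, a (k + N) :=
    calc ((n + 1 - N : ℕ) : ℝ) * a n = ∑ _k ∈ Finset.range (n + 1 - N), a n := by simp
      _ ≤ ∑ k ∈ Finset.range (n + 1 - N), a (k + N) :=
        Finset.sum_le_sum fun k hk => ha (by rw [Finset.mem_range] at hk; omega)
      _ ≤ ∑' k, a (k + N) := ((summable_nat_add_iff N).2 hs).sum_le_tsum _ fun k _ => h0 _
  have hhalf : ((n : ℝ) + 1) ≤ 2 * ((n + 1 - N : ℕ) : ℝ) := by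
    have hn' : 2 * (N : ℝ) ≤ n := by exact_mod_cast hn
    rw [Nat.cast_sub (by omega)]
    push_cast
    linarith
  linarith [mul_le_mul_of_nonneg_right hhalf (h0 n)]

def IsSeparated (c : ℝ) (d : ℕ) (g : ℕ → ℝ) : Prop :=
  ∀ a b : ℕ, a < b → c ≤ ((b : ℝ) - a) * (g a + g b) ^ d

namespace IsSeparated

variable {c : ℝ} {d : ℕ} {g : ℕ → ℝ}

theorem comp_add (h : IsSeparated c d g) (n₀ : ℕ) : IsSeparated c d fun j => g (n₀ + j) := by
  intro a b hab
  have := h (n₀ + a) (n₀ + b) (by omega)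
  push_cast at this
  convert this using 2
  ring

theorem eventually_pos (h : IsSeparated c d g) (hc : 0 < c) (hd : d ≠ 0) (hg : ∀ n, 0 ≤ g n) :
    ∃ n₀, ∀ n ≥ n₀, 0 < g n := by
  by_cases hzero : ∃ k, g k = 0
  · obtain ⟨k, hk⟩ := hzero
    refine ⟨k + 1, fun n hn => (hg n).lt_of_ne' fun hn0 => ?_⟩
    have := h k n (by omega)
    rw [hk, hn0, add_zero, zero_pow hd, mul_zero] at this
    exact this.not_gt hc
  · push Not at hzero
    exact ⟨0, fun n _ => (hg n).lt_of_ne' (hzero n)⟩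

theorem frequently_le_mul_runningMin_pow (h : IsSeparated c d g) (hg : ∀ n, 0 < g n) :
    ∃ᶠ n in atTop, c / 2 ^ d ≤ (n + 1) * runningMin g n ^ d := by
  rw [frequently_atTop]
  intro N
  by_cases hdrop : ∃ m ≥ N, runningMin g (m + 1) < runningMin g m
  · obtain ⟨m, hmN, hm⟩ := hdrop
    have hgm : g (m + 1) ≤ runningMin g m := by
      rw [runningMin_succ] at hm
      exact ((min_lt_iff.1 hm).resolve_left (lt_irrefl _)).le
    obtain ⟨r, hr, hgr⟩ := exists_eq_runningMin g m
    refine ⟨m, hmN, ?_⟩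
    have hlen : ((m + 1 : ℕ) : ℝ) - r ≤ m + 1 := by push_cast; linarith [r.cast_nonneg (α := ℝ)]
    have hsum : g r + g (m + 1) ≤ 2 * runningMin g m := by linarith
    have hsum_nonneg : 0 ≤ g r + g (m + 1) := add_nonneg (hg r).le (hg (m + 1)).le
    rw [div_le_iff₀' (by positivity)]
    calc c ≤ (((m + 1 : ℕ) : ℝ) - r) * (g r + g (m + 1)) ^ d := h r (m + 1) (by omega)
      _ ≤ (m + 1) * (2 * runningMin g m) ^ d := by gcongr
      _ = 2 ^ d * ((m + 1) * runningMin g m ^ d) := by ring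
  · push Not at hdrop
    have hconst : ∀ n ≥ N, runningMin g n = runningMin g N := by
      intro n hn
      induction n, hn using Nat.le_induction with
      | base => rfl
      | succ n hn ih => rw [← ih]; exact le_antisymm (runningMin_antitone g n.le_succ) (hdrop n hn)
    have hpos : 0 < runningMin g N ^ d := pow_pos (lt_runningMin g hg N) d
    obtain ⟨n, hn⟩ := exists_nat_ge (c / 2 ^ d / runningMin g N ^ d)
    refine ⟨max n N, le_max_right _ _, ?_⟩
    rw [hconst _ (le_max_right _ _), ← div_le_iff₀ hpos]
    calc c / 2 ^ d / runningMin g N ^ d ≤ n := hn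
      _ ≤ (max n N : ℕ) + 1 := by norm_cast; omega

theorem not_summable_runningMin_pow (h : IsSeparated c d g) (hc : 0 < c) (hg : ∀ n, 0 < g n) :
    ¬ Summable fun n => runningMin g n ^ d :=
  not_summable_of_frequently_le_mul
    (fun _ _ hmn => pow_le_pow_left₀ (lt_runningMin g hg _).le (runningMin_antitone g hmn) d)
    (fun n => pow_nonneg (lt_runningMin g hg n).le d) (by positivity)
    (h.frequently_le_mul_runningMin_pow hg)

theorem exists_mem_calD_eventually_le (h : IsSeparated c d g) (hc : 0 < c) (hg : ∀ n, 0 ≤ g n) :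
    ∃ ψ ∈ calD d, ∀ᶠ n in atTop, ψ n ≤ g n := by
  rcases eq_or_ne d 0 with rfl | hd
  · refine ⟨fun _ => 0, ⟨fun _ => le_rfl, antitone_const, ?_⟩, Eventually.of_forall hg⟩
    simp [summable_const_iff]
  obtain ⟨n₀, hn₀⟩ := h.eventually_pos hc hd hg
  have hpos : ∀ j, 0 < g (n₀ + j) := fun j => hn₀ _ (Nat.le_add_right n₀ j)
  refine ⟨fun n => runningMin (fun j => g (n₀ + j)) (n - n₀), ⟨?_, ?_, ?_⟩, ?_⟩
  · exact fun n => (lt_runningMin _ hpos _).le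
  · exact (runningMin_antitone _).comp_monotone fun a b hab => Nat.sub_le_sub_right hab n₀
  · rw [← summable_nat_add_iff n₀]
    simpa using (h.comp_add n₀).not_summable_runningMin_pow hc hpos
  · filter_upwards [eventually_ge_atTop n₀] with n hn
    simpa [Nat.add_sub_cancel' hn] using runningMin_le (fun j => g (n₀ + j)) le_rfl (n := n - n₀)

end IsSeparated

section Nrm

variable {d : ℕ}

theorem nrm_nonneg (u : Fin d → ℝ) : 0 ≤ nrm u :=
  Real.iSup_nonneg fun _ => abs_nonneg _

theorem abs_sub_round_le_nrm (u : Fin d → ℝ) (i : Fin d) : |u i - round (u i)| ≤ nrm u :=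
  le_ciSup (f := fun i => |u i - round (u i)|) (Set.finite_range _).bddAbove i

theorem nrm_sub_le (u v : Fin d → ℝ) : nrm (u - v) ≤ nrm u + nrm v := by
  refine Real.iSup_le (fun i => ?_) (add_nonneg (nrm_nonneg u) (nrm_nonneg v))
  calc |(u - v) i - round ((u - v) i)| ≤ |(u - v) i - ((round (u i) - round (v i) : ℤ) : ℝ)| :=
        round_le _ _
    _ = |(u i - round (u i)) - (v i - round (v i))| := by
          rw [Pi.sub_apply, Int.cast_sub]
          congr 1
          ring
    _ ≤ |u i - round (u i)| + |v i - round (v i)| := abs_sub _ _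
    _ ≤ nrm u + nrm v := add_le_add (abs_sub_round_le_nrm u i) (abs_sub_round_le_nrm v i)

theorem isSeparated_nrm {c : ℝ} {x : Fin d → ℝ}
    (hx : ∀ k : ℕ, 0 < k → c ≤ k * nrm (fun i => (k : ℝ) * x i) ^ d) (y : Fin d → ℝ) :
    IsSeparated c d fun n => nrm fun i => (n : ℝ) * x i + y i := by
  intro a b hab
  have hdiff : (fun i => ((b - a : ℕ) : ℝ) * x i)
      = (fun i => (b : ℝ) * x i + y i) - (fun i => (a : ℝ) * x i + y i) := by
    ext i
    simp only [Nat.cast_sub hab.le, Pi.sub_apply]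
    ring
  calc c ≤ ((b - a : ℕ) : ℝ) * nrm (fun i => ((b - a : ℕ) : ℝ) * x i) ^ d := hx _ (by omega)
    _ ≤ ((b : ℝ) - a) *
          (nrm (fun i => (a : ℝ) * x i + y i) + nrm fun i => (b : ℝ) * x i + y i) ^ d := by
      rw [hdiff, Nat.cast_sub hab.le, add_comm (nrm _)]
      gcongr
      · exact sub_nonneg.2 (by exact_mod_cast hab.le)
      · exact nrm_nonneg _
      · exact nrm_sub_le _ _

end Nrm

theorem mem_Phi_iff {d : ℕ} {x y : Fin d → ℝ} :
    y ∈ Phi x ↔ ∀ ψ ∈ calD d, ∃ᶠ n : ℕ in atTop, nrm (fun i => (n : ℝ) * x i + y i) < ψ n :=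
  Set.mem_iInter₂

theorem stmt4 {d : ℕ} (x : Fin d → ℝ)
    (hbad : 0 < sInf {r : ℝ | ∃ n : ℕ, 0 < n ∧
      r = (n : ℝ) * (nrm (fun i => (n : ℝ) * x i)) ^ d}) :
    Phi x = ∅ := by
  have hx : ∀ k : ℕ, 0 < k → sInf {r : ℝ | ∃ n : ℕ, 0 < n ∧
      r = (n : ℝ) * (nrm (fun i => (n : ℝ) * x i)) ^ d} ≤ k * nrm (fun i => (k : ℝ) * x i) ^ d :=
    fun k hk => csInf_le ⟨0, by
      rintro _ ⟨n, -, rfl⟩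
      exact mul_nonneg n.cast_nonneg (pow_nonneg (nrm_nonneg _) d)⟩ ⟨k, hk, rfl⟩
  refine Set.eq_empty_of_forall_notMem fun y hy => ?_
  obtain ⟨ψ, hψ, hψle⟩ :=
    (isSeparated_nrm hx y).exists_mem_calD_eventually_le hbad fun _ => nrm_nonneg _
  obtain ⟨n, hlt, hle⟩ := ((mem_Phi_iff.1 hy ψ hψ).and_eventually hψle).exists
  exact hle.not_gt hlt
end

section
/- Let d = 1 and let x, y ∈ ℚ. Then y ∈ Φ(x) if and only if there exists n ∈ ℤ with nx + y ∈ ℤ. -/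
open scoped ENNReal
open Filter

/-- Distance from `t ∈ ℝ` to the nearest integer. -/
noncomputable def nrm1 (t : ℝ) : ℝ := |t - round t|

/-- `S_ℓ(x,y) = Σ_{n≥ℓ} min_{ℓ≤m≤n} ‖mx+y‖`, valued in `[0,∞]` (case `d = 1`). -/
noncomputable def S1 (l : ℤ) (x y : ℝ) : ℝ≥0∞ :=
  ∑' n : ℕ, ⨅ m ∈ Finset.Icc l (l + n), ENNReal.ofReal (nrm1 ((m : ℝ) * x + y))

/-- The class `𝒟` of non-increasing `ψ : ℕ → ℝ≥0` with `Σ ψ(n) = ∞` (case `d = 1`). -/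
def calD1 : Set (ℕ → ℝ) := {ψ | (∀ n, 0 ≤ ψ n) ∧ Antitone ψ ∧ ¬ Summable ψ}

/-- `Π` for `d = 1`. -/
def Pi1 : Set (ℝ × ℝ) :=
  {p | ∀ ψ ∈ calD1, ∃ᶠ n : ℕ in atTop, nrm1 ((n : ℝ) * p.1 + p.2) < ψ n}

/-- The vertical fiber `Φ(x)`. -/
def Phi1 (x : ℝ) : Set ℝ := {y | (x, y) ∈ Pi1}

/-- The horizontal fiber `Π^y`. -/
def PiY1 (y : ℝ) : Set ℝ := {x | (x, y) ∈ Pi1}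

/-!
If `y ∈ Φ(x)`, test against the constant function `1 / q` with `q = den x * den y`: every
`nx + y` lies in `q⁻¹ℤ`, so `‖nx + y‖ < 1/q` forces `nx + y ∈ ℤ`. Conversely, if `nx + y ∈ ℤ`
then `Nx + y ∈ ℤ` for every `N ≡ n (mod den x)`, and on these infinitely many `N` we have
`‖Nx + y‖ = 0 < ψ(N)`, since a function in `𝒟` never vanishes.
-/

lemma pos_of_mem_calD1 {ψ : ℕ → ℝ} (hψ : ψ ∈ calD1) (n : ℕ) : 0 < ψ n := by
  obtain ⟨hψ_nonneg, hψ_anti, hψ_not_summable⟩ := hψ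
  refine (hψ_nonneg n).lt_of_ne' fun hψn => hψ_not_summable ?_
  refine summable_of_ne_finset_zero (s := Finset.range n) fun m hm => ?_
  have hnm : n ≤ m := by simpa using hm
  exact le_antisymm (hψn ▸ hψ_anti hnm) (hψ_nonneg m)

lemma const_mem_calD1 {c : ℝ} (hc : 0 < c) : (fun _ : ℕ => c) ∈ calD1 :=
  ⟨fun _ => hc.le, antitone_const, fun hs => hc.ne' (summable_const_iff c |>.mp hs)⟩

lemma nrm1_nonneg (t : ℝ) : 0 ≤ nrm1 t := abs_nonneg _

@[simp]
lemma nrm1_intCast (z : ℤ) : nrm1 z = 0 := by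
  simp [nrm1]

lemma eq_round_of_nrm1_lt {t : ℝ} {q : ℕ} {z : ℤ} (hqt : q * t = z) (ht : nrm1 t < 1 / q) :
    t = round t := by
  have hq : (0 : ℝ) < q := one_div_pos.mp ((nrm1_nonneg t).trans_lt ht)
  have hw : (q : ℝ) * (t - round t) = ((z - q * round t : ℤ) : ℝ) := by
    push_cast
    rw [mul_sub, hqt]
  have hw_abs : |((z - q * round t : ℤ) : ℝ)| < 1 := by
    rw [← hw, abs_mul, abs_of_pos hq]
    calc (q : ℝ) * |t - round t| < q * (1 / q) := mul_lt_mul_of_pos_left ht hq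
      _ = 1 := mul_one_div_cancel hq.ne'
  have hw_zero : z - q * round t = 0 := Int.abs_lt_one_iff.mp (by exact_mod_cast hw_abs)
  rw [hw_zero, Int.cast_zero, mul_eq_zero] at hw
  exact sub_eq_zero.mp (hw.resolve_left hq.ne')

lemma den_mul_den_mul_int_mul_add (x y : ℚ) (n : ℤ) :
    ((x.den * y.den : ℕ) : ℚ) * (n * x + y) = ((n * y.den * x.num + x.den * y.num : ℤ) : ℚ) := by
  push_cast
  linear_combination (n * y.den : ℚ) * Rat.den_mul_eq_num x + (x.den : ℚ) * Rat.den_mul_eq_num y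

lemma exists_int_mul_add_eq_of_modEq {x y : ℚ} {n n' : ℤ} {m : ℤ} (hn : n * x + y = m)
    (hn' : n' ≡ n [ZMOD x.den]) : ∃ m' : ℤ, n' * x + y = m' := by
  obtain ⟨j, hj⟩ := hn'.symm.dvd
  refine ⟨m + j * x.num, ?_⟩
  have hn'_eq : (n' : ℚ) = n + x.den * j := by
    rw [← sub_eq_iff_eq_add']
    exact_mod_cast hj
  push_cast
  rw [hn'_eq]
  linear_combination hn + (j : ℚ) * Rat.den_mul_eq_num x

lemma frequently_natCast_modEq_int (q : ℕ) (hq : q ≠ 0) (n : ℤ) :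
    ∃ᶠ N : ℕ in atTop, (N : ℤ) ≡ n [ZMOD q] := by
  have hr : (0 : ℤ) ≤ n % q := Int.emod_nonneg n (by exact_mod_cast hq)
  refine (Nat.frequently_modEq hq (n % q).toNat).mono fun N hN => ?_
  have hN' : (N : ℤ) ≡ (n % q).toNat [ZMOD q] := Int.natCast_modEq_iff.mpr hN
  rw [Int.toNat_of_nonneg hr] at hN'
  exact hN'.trans (Int.mod_modEq n q)

theorem stmt15 (x y : ℚ) :
    (y : ℝ) ∈ Phi1 (x : ℝ) ↔ ∃ n : ℤ, ∃ m : ℤ, (n : ℚ) * x + y = (m : ℚ) := by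
  constructor
  · intro hy
    set q : ℕ := x.den * y.den
    have hq : (0 : ℝ) < 1 / q := by positivity
    obtain ⟨n, hn⟩ := (hy _ (const_mem_calD1 hq)).exists
    have hqt : (q : ℝ) * ((n * x + y : ℚ) : ℝ) = ((n * y.den * x.num + x.den * y.num : ℤ) : ℝ) := by
      exact_mod_cast den_mul_den_mul_int_mul_add x y n
    have hround := eq_round_of_nrm1_lt hqt (by push_cast; exact hn)
    exact ⟨n, round ((n * x + y : ℚ) : ℝ), by exact_mod_cast hround⟩
  · rintro ⟨n, m, hnm⟩ ψ hψ
    refine (frequently_natCast_modEq_int x.den x.den_nz n).mono fun N hN => ?_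
    obtain ⟨m', hm'⟩ := exists_int_mul_add_eq_of_modEq hnm hN
    have hm'_real : (N : ℝ) * x + y = m' := by exact_mod_cast hm'
    rw [hm'_real, nrm1_intCast]
    exact pos_of_mem_calD1 hψ N
end

section
/- Let d = 1. If y ∈ ℚ, then Π^y ⊆ ℚ, i.e., every x ∈ ℝ such that for all ψ ∈ 𝒟 there are infinitely many n with ‖nx+y‖ < ψ(n), must be rational. -/
open scoped ENNReal
open Filter

lemma nrm1_le_abs_sub_intCast (t : ℝ) (z : ℤ) : nrm1 t ≤ |t - z| := round_le t z

lemma nrm1_add_intCast (t : ℝ) (z : ℤ) : nrm1 (t + z) = nrm1 t := by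
  simp [nrm1, round_add_intCast]

lemma nrm1_natCast_mul_le (q : ℕ) (t : ℝ) : nrm1 (q * t) ≤ q * nrm1 t :=
  calc nrm1 (q * t) ≤ |q * t - ((q * round t : ℤ) : ℝ)| := nrm1_le_abs_sub_intCast _ _
    _ = q * nrm1 t := by
      rw [Int.cast_mul, Int.cast_natCast, ← mul_sub, abs_mul, Nat.abs_cast, nrm1]

lemma Irrational.nrm1_natCast_mul_pos {α : ℝ} (hα : Irrational α) {m : ℕ} (hm : 1 ≤ m) :
    0 < nrm1 (m * α) :=
  abs_pos.mpr <| sub_ne_zero.mpr <| (hα.natCast_mul (by omega)).ne_int _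

lemma exists_nrm1_natCast_mul_lt (α : ℝ) {ε : ℝ} (hε : 0 < ε) :
    ∃ k : ℕ, 1 ≤ k ∧ nrm1 (k * α) < ε := by
  obtain ⟨n, hn⟩ := exists_nat_gt (1 / ε)
  obtain ⟨k, hk0, -, hk⟩ := Real.exists_nat_abs_mul_sub_round_le α n.succ_pos
  refine ⟨k, hk0, hk.trans_lt ?_⟩
  rw [div_lt_iff₀ (by positivity)]
  rw [div_lt_iff₀ hε] at hn
  push_cast
  nlinarith

/-- `q` is a best approximation (of the second kind) of `α`. -/
def IsBestApprox (α : ℝ) (q : ℕ) : Prop :=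
  1 ≤ q ∧ ∀ m : ℕ, 1 ≤ m → m < q → nrm1 (q * α) < nrm1 (m * α)

lemma exists_isBestApprox_le (α : ℝ) {m : ℕ} (hm : 1 ≤ m) :
    ∃ q, IsBestApprox α q ∧ q ≤ m ∧ nrm1 (q * α) ≤ nrm1 (m * α) := by
  induction m using Nat.strong_induction_on with
  | _ m ih =>
    by_cases hbest : IsBestApprox α m
    · exact ⟨m, hbest, le_rfl, le_rfl⟩
    · obtain ⟨j, hj1, hjm, hj⟩ : ∃ j : ℕ, 1 ≤ j ∧ j < m ∧ nrm1 (j * α) ≤ nrm1 (m * α) := by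
        simpa [IsBestApprox, hm] using hbest
      obtain ⟨q, hq, hqj, hqα⟩ := ih j hjm hj1
      exact ⟨q, hq, hqj.trans hjm.le, hqα.trans hj⟩

lemma Irrational.exists_isBestApprox_gt {α : ℝ} (hα : Irrational α) (K : ℕ) :
    ∃ q, IsBestApprox α q ∧ K < q := by
  obtain ⟨j₀, hj₀, hmin⟩ := (Finset.Icc 1 (K + 1)).exists_min_image (fun j : ℕ ↦ nrm1 (j * α))
    ⟨1, by simp⟩
  obtain ⟨m, hm, hmα⟩ :=
    exists_nrm1_natCast_mul_lt α (hα.nrm1_natCast_mul_pos (Finset.mem_Icc.mp hj₀).1)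
  obtain ⟨q, hq, -, hqα⟩ := exists_isBestApprox_le α hm
  refine ⟨q, hq, ?_⟩
  by_contra! hqK
  exact (hqα.trans_lt hmα).not_ge (hmin q (Finset.mem_Icc.mpr ⟨hq.1, by omega⟩))

/-- The integer `q round (m α) - m round (q α)` equals `m (q α - round (q α)) - q (m α - round (m α))`;
if `‖m α‖ < 1/(2q)` it has absolute value `< 1`, hence vanishes, which forces `‖m α‖ ≤ ‖q α‖`. -/
lemma IsBestApprox.one_le_two_mul_nrm1 {α : ℝ} {q : ℕ} (hq : IsBestApprox α q) {m : ℕ}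
    (hm : 1 ≤ m) (hmq : m < q) : 1 ≤ 2 * q * nrm1 (m * α) := by
  by_contra! hsmall
  set eq := q * α - round (q * α)
  set em := m * α - round (m * α)
  have hrec : |eq| < |em| := hq.2 m hm hmq
  have hm' : (1 : ℝ) ≤ m := by exact_mod_cast hm
  have hmq' : (m : ℝ) < q := by exact_mod_cast hmq
  have hint : m * eq - q * em = ((q * round (m * α) - m * round (q * α) : ℤ) : ℝ) := by
    simp only [eq, em]; push_cast; ring
  have hzero : m * eq = q * em := by
    suffices q * round (m * α) - m * round (q * α) = 0 by
      rw [this, Int.cast_zero, sub_eq_zero] at hint; exact hint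
    rw [← Int.abs_lt_one_iff, ← Int.cast_lt (R := ℝ), Int.cast_abs, ← hint, Int.cast_one]
    calc |m * eq - q * em| ≤ m * |eq| + q * |em| := by
          simpa [abs_mul] using abs_sub (m * eq) (q * em)
      _ < 1 := by change 2 * q * |em| < 1 at hsmall; nlinarith [abs_nonneg eq]
  have := congrArg abs hzero
  rw [abs_mul, abs_mul, Nat.abs_cast, Nat.abs_cast] at this
  nlinarith [abs_nonneg eq]

/-- Olivier's theorem (a summable non-increasing sequence is `o(1/n)`), contrapositively. -/
lemma not_summable_of_frequently_le_natCast_mul {f : ℕ → ℝ} (hf0 : ∀ n, 0 ≤ f n)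
    (hf : Antitone f) {c : ℝ} (hc : 0 < c) (hfreq : ∃ᶠ n : ℕ in atTop, c ≤ n * f n) :
    ¬ Summable f := by
  intro hs
  obtain ⟨K, hK⟩ := eventually_atTop.mp <|
    (tendsto_sum_nat_add f).eventually (eventually_lt_nhds (half_pos hc))
  obtain ⟨n, hn, hKn⟩ := (hfreq.and_eventually (eventually_ge_atTop (2 * K))).exists
  have hblock : ((n - K : ℕ) : ℝ) * f n ≤ ∑ k ∈ Finset.range (n - K), f (k + K) := by
    simpa using Finset.card_nsmul_le_sum (Finset.range (n - K)) (fun k ↦ f (k + K)) (f n)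
      fun k hk ↦ hf (by have := Finset.mem_range.mp hk; omega)
  have htail : ∑ k ∈ Finset.range (n - K), f (k + K) ≤ ∑' k, f (k + K) :=
    Summable.sum_le_tsum _ (fun k _ ↦ hf0 _) ((summable_nat_add_iff K).mpr hs)
  have hhalf : (n : ℝ) ≤ 2 * ((n - K : ℕ) : ℝ) := by
    have : (2 * K : ℝ) ≤ n := by exact_mod_cast hKn
    rw [Nat.cast_sub (by omega)]
    linarith
  nlinarith [hK K le_rfl, hf0 n]

noncomputable def minNrm1 (α : ℝ) (n : ℕ) : ℝ :=
  (Finset.Icc 1 (n + 1)).inf' ⟨1, by simp⟩ fun m : ℕ ↦ nrm1 (m * α)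

lemma minNrm1_nonneg (α : ℝ) (n : ℕ) : 0 ≤ minNrm1 α n :=
  Finset.le_inf' _ _ fun _ _ ↦ nrm1_nonneg _

lemma minNrm1_antitone (α : ℝ) : Antitone (minNrm1 α) := fun _ _ hnm ↦
  Finset.inf'_mono _ (Finset.Icc_subset_Icc_right (by omega)) _

lemma minNrm1_le (α : ℝ) {n : ℕ} (hn : 1 ≤ n) : minNrm1 α n ≤ nrm1 (n * α) :=
  Finset.inf'_le _ (Finset.mem_Icc.mpr ⟨hn, by omega⟩)

lemma IsBestApprox.one_le_two_mul_minNrm1 {α : ℝ} {q : ℕ} (hq : IsBestApprox α q) (h2q : 2 ≤ q) :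
    1 ≤ 2 * q * minNrm1 α (q - 2) := by
  obtain ⟨m, hm, hmin⟩ := Finset.exists_mem_eq_inf' (s := Finset.Icc 1 (q - 2 + 1))
    ⟨1, by simp⟩ fun m : ℕ ↦ nrm1 (m * α)
  rw [minNrm1, hmin]
  exact hq.one_le_two_mul_nrm1 (Finset.mem_Icc.mp hm).1 (by have := (Finset.mem_Icc.mp hm).2; omega)

lemma Irrational.not_summable_minNrm1 {α : ℝ} (hα : Irrational α) :
    ¬ Summable (minNrm1 α) := by
  refine not_summable_of_frequently_le_natCast_mul (minNrm1_nonneg α) (minNrm1_antitone α)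
    (by norm_num : (0 : ℝ) < 1 / 4) (frequently_atTop.mpr fun K ↦ ?_)
  obtain ⟨q, hq, hKq⟩ := hα.exists_isBestApprox_gt (K + 4)
  refine ⟨q - 2, by omega, ?_⟩
  have h := hq.one_le_two_mul_minNrm1 (by omega)
  have hq4 : (4 : ℝ) ≤ q := by exact_mod_cast (by omega : 4 ≤ q)
  rw [Nat.cast_sub (by omega), Nat.cast_ofNat]
  nlinarith [minNrm1_nonneg α (q - 2)]

lemma nrm1_natCast_mul_den_mul_le (y : ℚ) (n : ℕ) (x : ℝ) :
    nrm1 (n * (y.den * x)) ≤ y.den * nrm1 (n * x + y) := by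
  have hnum : (y.den : ℝ) * (n * x + y) = n * (y.den * x) + (y.num : ℤ) := by
    rw [mul_add, ← Rat.cast_natCast, ← Rat.cast_mul, Rat.den_mul_eq_num, Rat.cast_intCast]; ring
  rw [← nrm1_add_intCast _ y.num, ← hnum]
  exact nrm1_natCast_mul_le _ _

theorem stmt17 (y : ℚ) (x : ℝ) (hx : x ∈ PiY1 (y : ℝ)) :
    ∃ q : ℚ, x = (q : ℝ) := by
  by_contra! hxq
  have hirr : Irrational (y.den * x) :=
    Irrational.natCast_mul (fun ⟨q, hq⟩ ↦ hxq q hq.symm) y.den_nz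
  have hd : (0 : ℝ) < y.den := by exact_mod_cast y.den_pos
  set ψ : ℕ → ℝ := fun n ↦ minNrm1 (y.den * x) n / y.den
  have hψ : ψ ∈ calD1 :=
    ⟨fun n ↦ div_nonneg (minNrm1_nonneg _ n) hd.le,
      fun _ _ hnm ↦ div_le_div_of_nonneg_right (minNrm1_antitone _ hnm) hd.le,
      fun hs ↦ hirr.not_summable_minNrm1 <| by simpa [ψ, hd.ne'] using hs.mul_right (y.den : ℝ)⟩
  have hψle : ∀ᶠ n : ℕ in atTop, ψ n ≤ nrm1 (n * x + y) :=
    eventually_atTop.mpr ⟨1, fun n hn ↦ by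
      rw [div_le_iff₀' hd]
      exact (minNrm1_le _ hn).trans (nrm1_natCast_mul_den_mul_le y n x)⟩
  obtain ⟨n, hlt, hle⟩ := ((hx ψ hψ).and_eventually hψle).exists
  exact hlt.not_ge hle
end
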